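/- Let d < e be integers and y ∈ V a nonzero element whose homogeneous components y_i satisfy: y_i = 0 for i < d, z := y_d ≠ 0, y_i = 0 for d < i < e, and y_e ≠ 0. Let 𝒦 = {𝔤 ∈ 𝒢 : 𝔤·y = 0} and let 𝒦̂ be the span of the leading terms of the nonzero elements of 𝒦. Then every h ∈ 𝒦̂ satisfies h·z = 0 and h·y_e ∈ 𝒢·z, where 𝒢·z denotes the subspace {𝔤·z : 𝔤 ∈ 𝒢}. In other words, 𝒦̂ ⊆ ℋ_{ȳₑ} := {h ∈ 𝒢 : h·z = 0 and h·y_e ∈ 𝒢·z}. -/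

import Mathlib

open DirectSum Module

/-- The degree-`i` homogeneous component of `v` with respect to the grading `𝒲`. -/
noncomputable def grComp {W : Type*} [AddCommGroup W] [Module ℂ W]
    (𝒲 : ℤ → Submodule ℂ W) [Decomposition 𝒲] (v : W) (i : ℤ) : W :=
  ((decompose 𝒲 v) i : W)

/-- `IsLead 𝒲 v d z` : `z` is the leading term of `v`, of degree `d`. -/
def IsLead {W : Type*} [AddCommGroup W] [Module ℂ W]
    (𝒲 : ℤ → Submodule ℂ W) [Decomposition 𝒲] (v : W) (d : ℤ) (z : W) : Prop :=
  grComp 𝒲 v d = z ∧ z ≠ 0 ∧ ∀ i < d, grComp 𝒲 v i = 0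

/-- The span of the leading terms of nonzero elements of a subspace `M`. -/
noncomputable def hatSub {W : Type*} [AddCommGroup W] [Module ℂ W]
    (𝒲 : ℤ → Submodule ℂ W) [Decomposition 𝒲] (M : Submodule ℂ W) : Submodule ℂ W :=
  Submodule.span ℂ {z | ∃ v ∈ M, v ≠ 0 ∧ ∃ d : ℤ, IsLead 𝒲 v d z}

/-- The Lie algebra stabilizer `{𝔤 ∈ L | 𝔤 ⬝ v = 0}` of `v`, as a subspace of `L`. -/
def lieStab (L : Type*) {V : Type*} [LieRing L] [LieAlgebra ℂ L]
    [AddCommGroup V] [Module ℂ V] [LieRingModule L V] [LieModule ℂ L V]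
    (v : V) : Submodule ℂ L where
  carrier := {g : L | ⁅g, v⁆ = 0}
  add_mem' := by
    intro a b ha hb
    simp only [Set.mem_setOf_eq] at *
    rw [add_lie, ha, hb, add_zero]
  zero_mem' := zero_lie v
  smul_mem' := by
    intro c g hg
    simp only [Set.mem_setOf_eq] at *
    rw [smul_lie, hg, smul_zero]

/-!
If `x ∈ 𝒦` has leading term `h = x_m`, the degree-`n` component of `0 = x ⬝ y` is
`∑ⱼ x_j ⬝ y_{n-j}`. In degree `m + d` only `x_m ⬝ y_d` survives, so `h ⬝ z = 0`; in degree `m + e`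
only `x_m ⬝ y_e` and `x_{m+e-d} ⬝ y_d` survive, so `h ⬝ y_e = -x_{m+e-d} ⬝ z ∈ 𝒢 ⬝ z`.
Both conditions are linear in `h`, so they pass to the span `𝒦̂`.
-/

section Grading

variable {W : Type*} [AddCommGroup W] [Module ℂ W] (𝒲 : ℤ → Submodule ℂ W) [Decomposition 𝒲]

lemma grComp_mem (v : W) (i : ℤ) : grComp 𝒲 v i ∈ 𝒲 i := SetLike.coe_mem _

lemma grComp_zero (i : ℤ) : grComp 𝒲 (0 : W) i = 0 := by
  simp [grComp]

lemma grComp_sum {ι : Type*} (s : Finset ι) (f : ι → W) (i : ℤ) :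
    grComp 𝒲 (∑ k ∈ s, f k) i = ∑ k ∈ s, grComp 𝒲 (f k) i := by
  simp [grComp]

lemma grComp_of_mem_same {i : ℤ} {x : W} (hx : x ∈ 𝒲 i) : grComp 𝒲 x i = x :=
  decompose_of_mem_same 𝒲 hx

lemma grComp_of_mem_ne {i j : ℤ} {x : W} (hx : x ∈ 𝒲 i) (h : i ≠ j) : grComp 𝒲 x j = 0 :=
  decompose_of_mem_ne 𝒲 hx h

open scoped Classical in
lemma sum_support_grComp (v : W) : ∑ i ∈ (decompose 𝒲 v).support, grComp 𝒲 v i = v :=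
  sum_support_decompose 𝒲 v

open scoped Classical in
lemma grComp_eq_zero_of_notMem_support {v : W} {i : ℤ} (h : i ∉ (decompose 𝒲 v).support) :
    grComp 𝒲 v i = 0 := by
  rw [DFinsupp.notMem_support_iff] at h
  simp [grComp, h]

end Grading

section GradedLieModule

variable {L V : Type*} [LieRing L] [Module ℂ L] [AddCommGroup V] [Module ℂ V] [LieRingModule L V]
  {𝒢 : ℤ → Submodule ℂ L} {𝒱 : ℤ → Submodule ℂ V} [Decomposition 𝒱]

lemma grComp_lie_of_mem (hact : ∀ (j i : ℤ), ∀ x ∈ 𝒢 j, ∀ v ∈ 𝒱 i, ⁅x, v⁆ ∈ 𝒱 (i + j))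
    {j : ℤ} {x : L} (hx : x ∈ 𝒢 j) (v : V) (n : ℤ) :
    grComp 𝒱 ⁅x, v⁆ n = ⁅x, grComp 𝒱 v (n - j)⁆ := by
  classical
  conv_lhs => rw [← sum_support_grComp 𝒱 v]
  rw [lie_sum, grComp_sum, Finset.sum_eq_single (n - j)]
  · exact grComp_of_mem_same 𝒱 (by simpa using hact j _ x hx _ (grComp_mem 𝒱 v (n - j)))
  · intro i _ hi
    exact grComp_of_mem_ne 𝒱 (hact j i x hx _ (grComp_mem 𝒱 v i)) (by omega)
  · intro hn
    rw [grComp_eq_zero_of_notMem_support 𝒱 hn, lie_zero, grComp_zero]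

open scoped Classical in
lemma grComp_lie [Decomposition 𝒢] (hact : ∀ (j i : ℤ), ∀ x ∈ 𝒢 j, ∀ v ∈ 𝒱 i, ⁅x, v⁆ ∈ 𝒱 (i + j))
    (x : L) (v : V) (n : ℤ) :
    grComp 𝒱 ⁅x, v⁆ n =
      ∑ j ∈ (decompose 𝒢 x).support, ⁅grComp 𝒢 x j, grComp 𝒱 v (n - j)⁆ := by
  conv_lhs => rw [← sum_support_grComp 𝒢 x]
  rw [sum_lie, grComp_sum]
  exact Finset.sum_congr rfl fun j _ => grComp_lie_of_mem hact (grComp_mem 𝒢 x j) v n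

variable [Decomposition 𝒢] {x : L} {y : V} {m d e : ℤ}

lemma lie_grComp_lowest_eq_zero (hact : ∀ (j i : ℤ), ∀ x ∈ 𝒢 j, ∀ v ∈ 𝒱 i, ⁅x, v⁆ ∈ 𝒱 (i + j))
    (hxy : ⁅x, y⁆ = 0) (hxlow : ∀ i < m, grComp 𝒢 x i = 0) (hylow : ∀ i < d, grComp 𝒱 y i = 0) :
    ⁅grComp 𝒢 x m, grComp 𝒱 y d⁆ = 0 := by
  classical
  have h := grComp_lie hact x y (d + m)
  rw [hxy, grComp_zero, Finset.sum_eq_single m] at h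
  · simpa using h.symm
  · intro j _ hjm
    rcases lt_or_gt_of_ne hjm with hlt | hgt
    · rw [hxlow j hlt, zero_lie]
    · rw [hylow (d + m - j) (by omega), lie_zero]
  · intro hm
    rw [grComp_eq_zero_of_notMem_support 𝒢 hm, zero_lie]

lemma lie_grComp_next_add_lie_eq_zero
    (hact : ∀ (j i : ℤ), ∀ x ∈ 𝒢 j, ∀ v ∈ 𝒱 i, ⁅x, v⁆ ∈ 𝒱 (i + j)) (hde : d < e)
    (hxy : ⁅x, y⁆ = 0) (hxlow : ∀ i < m, grComp 𝒢 x i = 0) (hylow : ∀ i < d, grComp 𝒱 y i = 0)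
    (hymid : ∀ i, d < i → i < e → grComp 𝒱 y i = 0) :
    ⁅grComp 𝒢 x m, grComp 𝒱 y e⁆ + ⁅grComp 𝒢 x (m + (e - d)), grComp 𝒱 y d⁆ = 0 := by
  classical
  have h := grComp_lie hact x y (e + m)
  rw [hxy, grComp_zero, Finset.sum_eq_add m (m + (e - d)) (by omega)] at h
  · simpa [show e + m - (m + (e - d)) = d by omega] using h.symm
  · rintro j - ⟨hjm, hjm'⟩
    rcases lt_or_gt_of_ne hjm with hlt | hgt
    · rw [hxlow j hlt, zero_lie]
    rcases lt_or_gt_of_ne (show e + m - j ≠ d by omega) with hlt' | hgt'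
    · rw [hylow _ hlt', lie_zero]
    · rw [hymid _ hgt' (by omega), lie_zero]
  all_goals intro hj; rw [grComp_eq_zero_of_notMem_support 𝒢 hj, zero_lie]

end GradedLieModule

section Stabilizer

variable (L : Type*) {V : Type*} [LieRing L] [LieAlgebra ℂ L] [AddCommGroup V] [Module ℂ V]
  [LieRingModule L V] [LieModule ℂ L V]

/-- The subspace `ℋ_{ȳₑ}` of the paper, for `z = y_d` and `w = y_e`. -/
def lieStabMod (z w : V) : Submodule ℂ L where
  carrier := {h | ⁅h, z⁆ = 0 ∧ ∃ g : L, ⁅g, z⁆ = ⁅h, w⁆}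
  add_mem' := by
    rintro a b ⟨ha, ga, hga⟩ ⟨hb, gb, hgb⟩
    exact ⟨by rw [add_lie, ha, hb, add_zero], ga + gb, by rw [add_lie, hga, hgb, add_lie]⟩
  zero_mem' := ⟨zero_lie z, 0, by rw [zero_lie, zero_lie]⟩
  smul_mem' := by
    rintro c a ⟨ha, ga, hga⟩
    exact ⟨by rw [smul_lie, ha, smul_zero], c • ga, by rw [smul_lie, hga, smul_lie]⟩

end Stabilizer

theorem statement6_general {L V : Type*} [LieRing L] [LieAlgebra ℂ L]
    [AddCommGroup V] [Module ℂ V]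
    [LieRingModule L V] [LieModule ℂ L V]
    (𝒢 : ℤ → Submodule ℂ L) [Decomposition 𝒢]
    (𝒱 : ℤ → Submodule ℂ V) [Decomposition 𝒱]
    (hact : ∀ (j i : ℤ), ∀ x ∈ 𝒢 j, ∀ v ∈ 𝒱 i, ⁅x, v⁆ ∈ 𝒱 (i + j))
    (d e : ℤ) (hde : d < e) (y : V)
    (hlow : ∀ i < d, grComp 𝒱 y i = 0)
    (hmid : ∀ i : ℤ, d < i → i < e → grComp 𝒱 y i = 0) :
    ∀ h ∈ hatSub 𝒢 (lieStab L y),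
      ⁅h, grComp 𝒱 y d⁆ = 0 ∧ ∃ g : L, ⁅g, grComp 𝒱 y d⁆ = ⁅h, grComp 𝒱 y e⁆ := by
  suffices hatSub 𝒢 (lieStab L y) ≤ lieStabMod L (grComp 𝒱 y d) (grComp 𝒱 y e) from
    fun h hh => this hh
  rw [hatSub, Submodule.span_le]
  rintro _ ⟨x, hxy, -, m, rfl, -, hxlow⟩
  refine ⟨lie_grComp_lowest_eq_zero hact hxy hxlow hlow, -grComp 𝒢 x (m + (e - d)), ?_⟩
  rw [neg_lie, neg_eq_iff_add_eq_zero, add_comm]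
  exact lie_grComp_next_add_lie_eq_zero hact hde hxy hxlow hlow hmid

theorem statement6 {L V : Type*} [LieRing L] [LieAlgebra ℂ L] [FiniteDimensional ℂ L]
    [AddCommGroup V] [Module ℂ V] [FiniteDimensional ℂ V]
    [LieRingModule L V] [LieModule ℂ L V]
    (𝒢 : ℤ → Submodule ℂ L) [Decomposition 𝒢]
    (𝒱 : ℤ → Submodule ℂ V) [Decomposition 𝒱]
    (hbr : ∀ (i j : ℤ), ∀ x ∈ 𝒢 i, ∀ y ∈ 𝒢 j, ⁅x, y⁆ ∈ 𝒢 (i + j))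
    (hact : ∀ (j i : ℤ), ∀ x ∈ 𝒢 j, ∀ v ∈ 𝒱 i, ⁅x, v⁆ ∈ 𝒱 (i + j))
    (d e : ℤ) (hde : d < e) (y : V) (hy : y ≠ 0)
    (hlow : ∀ i < d, grComp 𝒱 y i = 0)
    (hz : grComp 𝒱 y d ≠ 0)
    (hmid : ∀ i : ℤ, d < i → i < e → grComp 𝒱 y i = 0)
    (hye : grComp 𝒱 y e ≠ 0) :
    ∀ h ∈ hatSub 𝒢 (lieStab L y),
      ⁅h, grComp 𝒱 y d⁆ = 0 ∧ ∃ g : L, ⁅g, grComp 𝒱 y d⁆ = ⁅h, grComp 𝒱 y e⁆ :=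
  statement6_general 𝒢 𝒱 hact d e hde y hlow hmid
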